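/- The Lebesgue measure in ℝ⁵ of the set { (a, b₁, b₂, b₃, b₄) : bᵢ ≥ 0 for all i, bᵢ + b_j ≤ a for all i ≠ j, and 3a − (b₁ + b₂ + b₃ + b₄) ≤ 1 } equals 1/720. -/

import Mathlib

/-!
Permuting the `bᵢ` preserves both the polytope and Lebesgue measure, and the `4!` chambers on
which the `bᵢ` are sorted overlap only in the null set of ties, so the volume is `24` times that of
the sorted chamber `0 ≤ b₁ ≤ b₂ ≤ b₃ ≤ b₄, b₃ + b₄ ≤ a, 3a - Σ bᵢ ≤ 1`. That chamber is a simplex: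
its facet functionals `b₁, b₂ - b₁, b₃ - b₂, b₄ - b₃, a - b₃ - b₄`, weighted by `2, 3, 4, 2, 3`,
sum to `3a - Σ bᵢ`, so a linear map of determinant `144` carries it onto the corner simplex
`{x ≥ 0, Σ xᵢ ≤ 1}` of volume `1/5!`. Hence the volume is `24 / (144 · 120) = 1/720`.
-/

open MeasureTheory Matrix
open scoped Nat

def cornerSimplex (n : ℕ) (s : ℝ) : Set (Fin n → ℝ) := {x | (∀ i, 0 ≤ x i) ∧ ∑ i, x i ≤ s}

theorem cornerSimplex_eq_empty (n : ℕ) {s : ℝ} (hs : s < 0) : cornerSimplex n s = ∅ :=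
  Set.eq_empty_of_forall_notMem fun _ hx =>
    (Finset.sum_nonneg fun i _ => hx.1 i).not_gt (hx.2.trans_lt hs)

theorem integral_sub_pow_div_factorial (n : ℕ) (s : ℝ) :
    ∫ t in (0)..s, (s - t) ^ n / n ! = s ^ (n + 1) / (n + 1)! := by
  rw [intervalIntegral.integral_div, intervalIntegral.integral_comp_sub_left (fun t => t ^ n),
    sub_self, sub_zero, integral_pow, Nat.factorial_succ]
  push_cast
  field_simp
  ring

theorem volume_cornerSimplex (n : ℕ) {s : ℝ} (hs : 0 ≤ s) :
    volume (cornerSimplex n s) = ENNReal.ofReal (s ^ n / n !) := by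
  induction n generalizing s with
  | zero =>
    have : cornerSimplex 0 s = Set.univ := by ext x; simp [cornerSimplex, hs]
    simp [this, volume_pi]
  | succ n ih =>
    let B : Set (ℝ × (Fin n → ℝ)) := {p | 0 ≤ p.1 ∧ p.2 ∈ cornerSimplex n (s - p.1)}
    have hB : MeasurableSet B := by
      simp only [B, cornerSimplex, Set.ofPred_and, Set.ofPred_forall]
      measurability
    have hpre : cornerSimplex (n + 1) s = MeasurableEquiv.piFinSuccAbove (fun _ => ℝ) 0 ⁻¹' B := by
      ext x
      simp only [B, cornerSimplex, Fin.forall_fin_succ, Fin.sum_univ_succ, Set.mem_preimage,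
        MeasurableEquiv.piFinSuccAbove_apply, Fin.insertNthEquiv_symm_apply, Fin.removeNth_zero,
        Set.mem_ofPred_eq, Fin.tail, le_sub_iff_add_le']
      tauto
    have hslice (t : ℝ) : volume (Prod.mk t ⁻¹' B) =
        (Set.Icc 0 s).indicator (fun t => ENNReal.ofReal ((s - t) ^ n / n !)) t := by
      by_cases ht : t ∈ Set.Icc 0 s
      · have : Prod.mk t ⁻¹' B = cornerSimplex n (s - t) := by
          ext x; simp [B, ht.1]
        rw [Set.indicator_of_mem ht, this, ih (sub_nonneg.2 ht.2)]
      · have : Prod.mk t ⁻¹' B = ∅ := by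
          rw [Set.mem_Icc, not_and_or, not_le, not_le] at ht
          rcases ht with ht | ht
          · ext x; simp [B, ht.not_ge]
          · ext x; simp [B, cornerSimplex_eq_empty n (sub_neg.2 ht)]
        rw [Set.indicator_of_notMem ht, this, measure_empty]
    have hnonneg : ∀ t ∈ Set.Icc 0 s, 0 ≤ (s - t) ^ n / n ! := fun t ht =>
      div_nonneg (pow_nonneg (sub_nonneg.2 ht.2) n) (Nat.cast_nonneg _)
    rw [hpre, (volume_preserving_piFinSuccAbove _ 0).measure_preimage hB.nullMeasurableSet,
      Measure.volume_eq_prod, Measure.prod_apply hB]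
    simp_rw [hslice]
    rw [lintegral_indicator measurableSet_Icc, ← ofReal_integral_eq_lintegral_ofReal,
      integral_Icc_eq_integral_Ioc, ← intervalIntegral.integral_of_le hs,
      integral_sub_pow_div_factorial]
    · exact (by fun_prop : Continuous fun t : ℝ => (s - t) ^ n / n !).integrableOn_Icc
    · exact (ae_restrict_iff' measurableSet_Icc).2 (.of_forall hnonneg)

theorem volume_setOf_apply_eq_apply {ι : Type*} [Fintype ι] {i j : ι} (hij : i ≠ j) :
    volume {x : ι → ℝ | x i = x j} = 0 := by
  classical
  let p : Submodule ℝ (ι → ℝ) :=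
    LinearMap.ker ((LinearMap.proj i : (ι → ℝ) →ₗ[ℝ] ℝ) - LinearMap.proj j)
  have hp : {x : ι → ℝ | x i = x j} = p := by
    ext x
    simp [p, sub_eq_zero]
  rw [hp]
  refine Measure.addHaar_submodule _ p fun htop => ?_
  have := Submodule.eq_top_iff'.mp htop (Pi.single i 1)
  simp [p, Pi.single_eq_of_ne' hij] at this

theorem measurePreserving_comp_perm {ι β : Type*} [Fintype ι] [MeasureSpace β]
    [SigmaFinite (volume : Measure β)] (σ : Equiv.Perm ι) :
    MeasurePreserving (fun x : ι → β => x ∘ σ) := by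
  have h : (fun x : ι → β => x ∘ σ) = MeasurableEquiv.piCongrLeft (fun _ => β) σ.symm := by
    funext x i
    obtain ⟨b, rfl⟩ := σ.symm.surjective i
    simp only [Function.comp_apply, Equiv.apply_symm_apply, MeasurableEquiv.coe_piCongrLeft]
    exact (Equiv.piCongrLeft_apply_apply (fun _ => β) σ.symm x b).symm
  exact h ▸ volume_measurePreserving_piCongrLeft _ _

theorem measurableSet_setOf_monotone {ι : Type*} [Countable ι] [Preorder ι] :
    MeasurableSet {x : ι → ℝ | Monotone x} := by
  simp only [Monotone, Set.ofPred_forall]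
  measurability

theorem perm_eq_of_monotone_comp {α : Type*} [LinearOrder α] {n : ℕ} {x : Fin n → α}
    (hx : Function.Injective x) {σ τ : Equiv.Perm (Fin n)} (hσ : Monotone (x ∘ σ))
    (hτ : Monotone (x ∘ τ)) : σ = τ := by
  have key : ∀ ρ : Equiv.Perm (Fin n), Monotone (x ∘ ρ) → ρ = Tuple.sort x := fun ρ hρ =>
    Tuple.eq_sort_iff.2 ⟨hρ, fun i j hij h => absurd (ρ.injective (hx h)) hij.ne⟩
  rw [key σ hσ, key τ hτ]

theorem prod_volume_eq_factorial_mul_inter_monotone {α : Type*} [MeasurableSpace α]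
    (μ : Measure α) [SFinite μ] {n : ℕ} {S : Set (α × (Fin n → ℝ))} (hS : MeasurableSet S)
    (hperm : ∀ σ : Equiv.Perm (Fin n), ∀ p ∈ S, (p.1, p.2 ∘ σ) ∈ S) :
    μ.prod volume S = n ! * μ.prod volume (S ∩ {p | Monotone p.2}) := by
  let C (σ : Equiv.Perm (Fin n)) : Set (α × (Fin n → ℝ)) := S ∩ {p | Monotone (p.2 ∘ σ)}
  have hC : ∀ σ, MeasurableSet (C σ) := fun σ =>
    hS.inter (measurableSet_setOf_monotone.preimage
      ((measurePreserving_comp_perm σ).measurable.comp measurable_snd))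
  have hcover : S = ⋃ σ, C σ := by
    ext p
    simp only [Set.mem_iUnion, Set.mem_inter_iff, Set.mem_ofPred_eq, C]
    exact ⟨fun h => ⟨_, h, Tuple.monotone_sort p.2⟩, fun ⟨_, h, _⟩ => h⟩
  have hties : μ.prod volume (⋃ (i) (j) (_ : i ≠ j), {p : α × (Fin n → ℝ) | p.2 i = p.2 j}) = 0 :=
    measure_iUnion_null fun i => measure_iUnion_null fun j => measure_iUnion_null fun hij =>
      Measure.quasiMeasurePreserving_snd.preimage_null (volume_setOf_apply_eq_apply hij)
  have hdisj : Pairwise (Function.onFun (AEDisjoint (μ.prod volume)) C) := by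
    intro σ τ hστ
    refine measure_mono_null (fun p ⟨⟨_, hσ⟩, ⟨_, hτ⟩⟩ => ?_) hties
    by_contra hp
    simp only [Set.mem_iUnion, Set.mem_ofPred_eq, not_exists] at hp
    exact hστ (perm_eq_of_monotone_comp (fun i j h => by_contra fun hij => hp i j hij h) hσ hτ)
  have hsame : ∀ σ, μ.prod volume (C σ) = μ.prod volume (S ∩ {p | Monotone p.2}) := by
    intro σ
    have hpre : C σ = Prod.map id (· ∘ σ) ⁻¹' (S ∩ {p | Monotone p.2}) := by
      ext p
      refine ⟨fun ⟨h, hm⟩ => ⟨hperm σ p h, hm⟩, fun ⟨h, hm⟩ => ⟨?_, hm⟩⟩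
      simpa [Function.comp_assoc] using hperm σ⁻¹ _ h
    rw [hpre]
    exact ((MeasurePreserving.id μ).prod (measurePreserving_comp_perm σ)).measure_preimage
      (hS.inter (measurableSet_setOf_monotone.preimage measurable_snd)).nullMeasurableSet
  calc μ.prod volume S = ∑ σ, μ.prod volume (C σ) := by
        conv_lhs => rw [hcover]
        exact (measure_iUnion₀ hdisj fun σ => (hC σ).nullMeasurableSet).trans (tsum_fintype _)
    _ = n ! * μ.prod volume (S ∩ {p | Monotone p.2}) := by
        simp [hsame, Finset.card_univ, Fintype.card_perm]

theorem Monotone.forall_add_le_iff {α : Type*} [AddCommMonoid α] [PartialOrder α]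
    [IsOrderedAddMonoid α] {n : ℕ} {c : Fin (n + 2) → α} (hc : Monotone c) (a : α) :
    (∀ i j, i ≠ j → c i + c j ≤ a) ↔ c (Fin.last n).castSucc + c (Fin.last (n + 1)) ≤ a := by
  refine ⟨fun h => h _ _ (Fin.castSucc_lt_last _).ne, fun h i j hij => ?_⟩
  wlog hlt : i < j generalizing i j
  · exact add_comm (c i) (c j) ▸ this j i hij.symm (hij.lt_or_gt.resolve_left hlt)
  have hi : i ≤ (Fin.last n).castSucc := Fin.le_castSucc_iff.2 (hlt.trans_le (Fin.le_last j))
  exact (add_le_add (hc hi) (hc (Fin.le_last j))).trans h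

theorem Monotone.forall_nonneg_iff {α : Type*} [Zero α] [Preorder α] {n : ℕ}
    {c : Fin (n + 1) → α} (hc : Monotone c) : (∀ i, 0 ≤ c i) ↔ 0 ≤ c 0 :=
  ⟨fun h => h 0, fun h i => h.trans (hc (Fin.zero_le i))⟩

def nefPolytope : Set (ℝ × (Fin 4 → ℝ)) :=
  {p | (∀ i, 0 ≤ p.2 i) ∧ (∀ i j : Fin 4, i ≠ j → p.2 i + p.2 j ≤ p.1) ∧
    3 * p.1 - (∑ i, p.2 i) ≤ 1}

theorem measurableSet_nefPolytope : MeasurableSet nefPolytope := by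
  simp only [nefPolytope, Set.ofPred_and, Set.ofPred_forall]
  measurability

theorem mem_nefPolytope_perm (σ : Equiv.Perm (Fin 4)) {p : ℝ × (Fin 4 → ℝ)} (hp : p ∈ nefPolytope) :
    (p.1, p.2 ∘ σ) ∈ nefPolytope := by
  obtain ⟨hnonneg, hpair, hK⟩ := hp
  refine ⟨fun i => hnonneg (σ i), fun i j hij => hpair _ _ (σ.injective.ne hij), ?_⟩
  simpa only [Function.comp_apply, Equiv.sum_comp σ p.2] using hK

/-- The weighted facet functionals of the sorted chamber, in the coordinates `(b₁, b₂, b₃, b₄, a)`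
of `Fin 5 → ℝ` given by `MeasurableEquiv.piFinSuccAbove _ (Fin.last 4)`. -/
def nefChamberMatrix : Matrix (Fin 5) (Fin 5) ℝ :=
  !![2, 0, 0, 0, 0;
     -3, 3, 0, 0, 0;
     0, -4, 4, 0, 0;
     0, 0, -2, 2, 0;
     0, 0, -3, -3, 3]

theorem det_nefChamberMatrix : nefChamberMatrix.det = 144 := by
  simp [nefChamberMatrix, Matrix.det_succ_row_zero, Fin.sum_univ_succ]
  norm_num

theorem mulVec_nefChamberMatrix (y : Fin 5 → ℝ) :
    nefChamberMatrix *ᵥ y =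
      ![2 * y 0, 3 * (y 1 - y 0), 4 * (y 2 - y 1), 2 * (y 3 - y 2), 3 * (y 4 - y 2 - y 3)] := by
  ext k
  fin_cases k <;> simp [nefChamberMatrix, Matrix.mulVec, dotProduct, Fin.sum_univ_five] <;> ring

theorem nefPolytope_inter_monotone :
    nefPolytope ∩ {p | Monotone p.2} =
      {p | 0 ≤ p.2 0 ∧ Monotone p.2 ∧ p.2 2 + p.2 3 ≤ p.1 ∧ 3 * p.1 - ∑ i, p.2 i ≤ 1} := by
  ext p
  refine ⟨fun ⟨⟨hnonneg, hpair, hK⟩, hmono⟩ => ?_, fun ⟨h0, hmono, h23, hK⟩ => ?_⟩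
  · exact ⟨hmono.forall_nonneg_iff.1 hnonneg, hmono, (hmono.forall_add_le_iff _).1 hpair, hK⟩
  · exact ⟨⟨hmono.forall_nonneg_iff.2 h0, (hmono.forall_add_le_iff _).2 h23, hK⟩, hmono⟩

theorem piFinSuccAbove_preimage_nefPolytope_inter_monotone :
    MeasurableEquiv.piFinSuccAbove (fun _ => ℝ) (Fin.last 4) ⁻¹'
        (nefPolytope ∩ {p | Monotone p.2}) =
      toLin' nefChamberMatrix ⁻¹' cornerSimplex 5 1 := by
  rw [nefPolytope_inter_monotone]
  ext y
  simp only [Set.mem_preimage, MeasurableEquiv.piFinSuccAbove_apply,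
    Fin.insertNthEquiv_symm_apply, Fin.removeNth_last, Set.mem_ofPred_eq, toLin'_apply,
    mulVec_nefChamberMatrix, cornerSimplex, Fin.monotone_iff_le_succ, Fin.forall_fin_succ,
    IsEmpty.forall_iff, Fin.sum_univ_four, Fin.sum_univ_five]
  simp only [Fin.init, Fin.reduceCastSucc, Fin.reduceSucc, Fin.reduceLast, cons_val]
  constructor
  · rintro ⟨h0, ⟨h1, h2, h3, -⟩, h4, h5⟩
    refine ⟨⟨?_, ?_, ?_, ?_, ?_, trivial⟩, ?_⟩ <;> linarith
  · rintro ⟨⟨h0, h1, h2, h3, h4, -⟩, h5⟩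
    refine ⟨?_, ⟨?_, ?_, ?_, trivial⟩, ?_, ?_⟩ <;> linarith

theorem volume_nefPolytope_inter_monotone :
    volume (nefPolytope ∩ {p | Monotone p.2}) = ENNReal.ofReal (1 / 17280) := by
  rw [← (volume_preserving_piFinSuccAbove (fun _ => ℝ) (Fin.last 4)).measure_preimage_equiv,
    piFinSuccAbove_preimage_nefPolytope_inter_monotone, Measure.addHaar_preimage_linearMap,
    LinearMap.det_toLin', det_nefChamberMatrix, volume_cornerSimplex 5 zero_le_one,
    ← ENNReal.ofReal_mul (abs_nonneg _)]
  · norm_num [Nat.factorial]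
  · rw [LinearMap.det_toLin', det_nefChamberMatrix]
    norm_num

/-- The nef cone volume of the del Pezzo surface `S₄`: the Lebesgue measure in `ℝ⁵` of
`{(a, b₁, …, b₄) : bᵢ ≥ 0, bᵢ + b_j ≤ a (i ≠ j), 3a − Σbᵢ ≤ 1}` equals `1/720`. -/
theorem nef_volume_S4 :
    volume {p : ℝ × (Fin 4 → ℝ) |
        (∀ i, 0 ≤ p.2 i) ∧
        (∀ i j : Fin 4, i ≠ j → p.2 i + p.2 j ≤ p.1) ∧
        3 * p.1 - (∑ i, p.2 i) ≤ 1} =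
      ENNReal.ofReal (1 / 720) := by
  change volume nefPolytope = _
  rw [Measure.volume_eq_prod, prod_volume_eq_factorial_mul_inter_monotone volume
    measurableSet_nefPolytope mem_nefPolytope_perm, ← Measure.volume_eq_prod,
    volume_nefPolytope_inter_monotone, ← ENNReal.ofReal_natCast,
    ← ENNReal.ofReal_mul (by positivity)]
  norm_num [Nat.factorial]
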